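/- arXiv:2509.14842 — 2 statements merged into one kernel-verified Lean document; each statement's English description precedes it below -/
import Mathlib

section
/- Let f : ℕ → ℝ and let n₀ ≤ N be natural numbers such that Δf(n) ∉ ℤ for all n with n₀ ≤ n ≤ N+1. Then −∑_{n=n₀}^{N} e(f(n)) = (1/2)(1 + i·cot(π Δf(N+1)))·e(f(N+1)) − (1/2)(1 + i·cot(π Δf(n₀)))·e(f(n₀)) − (1/2) ∑_{n=n₀}^{N} e(f(n+1)) · i·(cot(π Δf(n+1)) − cot(π Δf(n))). -/
open Finset

/-- `e(x) = e^{2πix}`. -/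
noncomputable def e (x : ℝ) : ℂ := Complex.exp (2 * Real.pi * Complex.I * x)

lemma e_add (x α : ℝ) : e (x + α) = e x * e α := by
  rw [e, e, e, ← Complex.exp_add]
  push_cast
  ring_nf

lemma e_alpha (α : ℝ) :
    e α = ((Real.cos (Real.pi * α) : ℂ) + (Real.sin (Real.pi * α) : ℂ) * Complex.I) ^ 2 := by
  have h : (2 * Real.pi * Complex.I * α : ℂ)
      = ((Real.pi * α : ℝ) : ℂ) * Complex.I + ((Real.pi * α : ℝ) : ℂ) * Complex.I := by
    push_cast; ring
  rw [e, h, Complex.exp_add, Complex.exp_mul_I, ← Complex.ofReal_cos, ← Complex.ofReal_sin, sq]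

lemma key_lemma (x α : ℝ) (h : ∀ m : ℤ, α ≠ (m : ℝ)) :
    (1 / 2 : ℂ) * (1 + Complex.I * (Real.cot (Real.pi * α) : ℝ)) * e (x + α)
      - (1 / 2 : ℂ) * (1 + Complex.I * (Real.cot (Real.pi * α) : ℝ)) * e x = -e x := by
  have hs : Real.sin (Real.pi * α) ≠ 0 := by
    intro h0
    obtain ⟨n, hn⟩ := Real.sin_eq_zero_iff.mp h0
    refine h n (mul_left_cancel₀ Real.pi_ne_zero ?_)
    rw [← hn, mul_comm]
  have hcot : Real.cot (Real.pi * α) = Real.cos (Real.pi * α) / Real.sin (Real.pi * α) :=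
    Real.cot_eq_cos_div_sin _
  set S : ℂ := (Real.sin (Real.pi * α) : ℂ) with hS
  set C : ℂ := (Real.cos (Real.pi * α) : ℂ) with hCdef
  have hpyth : S ^ 2 + C ^ 2 = 1 := by
    rw [hS, hCdef, ← Complex.ofReal_pow, ← Complex.ofReal_pow, ← Complex.ofReal_add,
      Real.sin_sq_add_cos_sq, Complex.ofReal_one]
  have hsC : S ≠ 0 := by rw [hS]; exact_mod_cast hs
  rw [e_add, e_alpha α, hcot, Complex.ofReal_div, ← hS, ← hCdef]
  have hI := Complex.I_sq
  field_simp
  ring_nf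
  linear_combination (S ^ 2 * C * e x * Complex.I + 2 * S * C ^ 2 * e x + S ^ 3 * e x) * hI
    + (-(S * e x) + Complex.I * C * e x) * hpyth

/-- Abel-summation identity for exponential sums, valid whenever the
finite differences `Δf(n) = f(n+1) − f(n)` are non-integral for `n₀ ≤ n ≤ N+1`. -/
theorem stmt_2 (f : ℕ → ℝ) (n₀ N : ℕ) (hn₀N : n₀ ≤ N)
    (hnonint : ∀ n, n₀ ≤ n → n ≤ N + 1 → ∀ m : ℤ, f (n + 1) - f n ≠ (m : ℝ)) :
    -(∑ n ∈ Finset.Icc n₀ N, e (f n)) =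
      (1 / 2) * (1 + Complex.I * (Real.cot (Real.pi * (f (N + 2) - f (N + 1))) : ℝ))
          * e (f (N + 1))
        - (1 / 2) * (1 + Complex.I * (Real.cot (Real.pi * (f (n₀ + 1) - f n₀)) : ℝ))
          * e (f n₀)
        - (1 / 2) * ∑ n ∈ Finset.Icc n₀ N,
            e (f (n + 1)) * (Complex.I *
              ((Real.cot (Real.pi * (f (n + 2) - f (n + 1))) : ℝ)
                - (Real.cot (Real.pi * (f (n + 1) - f n)) : ℝ))) := by
  classical
  have hadd : ∀ k : ℕ, k + 1 + 1 = k + 2 := fun _ => rfl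
  set c : ℕ → ℂ := fun n =>
    (1 / 2 : ℂ) * (1 + Complex.I * ((Real.cot (Real.pi * (f (n + 1) - f n)) : ℝ))) with hc
  have tel : ∑ n ∈ Finset.Icc n₀ N, (c (n + 1) * e (f (n + 1)) - c n * e (f n))
      = c (N + 1) * e (f (N + 1)) - c n₀ * e (f n₀) := by
    rw [← Finset.Ico_add_one_right_eq_Icc, Finset.sum_Ico_eq_sum_range]
    have h1 : n₀ + (N + 1 - n₀) = N + 1 := by omega
    have h2 := Finset.sum_range_sub (fun i => c (n₀ + i) * e (f (n₀ + i))) (N + 1 - n₀)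
    simpa [h1, Nat.add_assoc] using h2
  have hmain : ∀ n ∈ Finset.Icc n₀ N, c n * e (f (n + 1)) - c n * e (f n) = -e (f n) := by
    intro n hn
    rw [Finset.mem_Icc] at hn
    have h := key_lemma (f n) (f (n + 1) - f n) (hnonint n hn.1 (by omega))
    have hx : f n + (f (n + 1) - f n) = f (n + 1) := by ring
    rw [hx] at h
    simpa only [hc] using h
  calc -(∑ n ∈ Finset.Icc n₀ N, e (f n))
      = ∑ n ∈ Finset.Icc n₀ N, (c n * e (f (n + 1)) - c n * e (f n)) := by
        rw [← Finset.sum_neg_distrib]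
        exact (Finset.sum_congr rfl hmain).symm
    _ = (∑ n ∈ Finset.Icc n₀ N, (c (n + 1) * e (f (n + 1)) - c n * e (f n)))
        - ∑ n ∈ Finset.Icc n₀ N, e (f (n + 1)) * (c (n + 1) - c n) := by
        rw [← Finset.sum_sub_distrib]
        exact Finset.sum_congr rfl fun n _ => by ring
    _ = c (N + 1) * e (f (N + 1)) - c n₀ * e (f n₀)
        - ∑ n ∈ Finset.Icc n₀ N, e (f (n + 1)) * (c (n + 1) - c n) := by rw [tel]
    _ = _ := by
        have hsum : ∑ n ∈ Finset.Icc n₀ N, e (f (n + 1)) * (c (n + 1) - c n)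
            = (1 / 2 : ℂ) * ∑ n ∈ Finset.Icc n₀ N,
                e (f (n + 1)) * (Complex.I *
                  ((Real.cot (Real.pi * (f (n + 2) - f (n + 1))) : ℝ)
                    - (Real.cot (Real.pi * (f (n + 1) - f n)) : ℝ))) := by
          rw [Finset.mul_sum]
          refine Finset.sum_congr rfl fun n _ => ?_
          simp only [hc, hadd]
          ring
        rw [hsum]
end

section
/- Let φ ∈ [0,1). If {bₙ}_{n≥1} ⊂ ℝ is a monotone bounded sequence and {zₙ}_{n≥1} ∈ 𝕎_φ, then {bₙ·zₙ}_{n≥1} ∈ 𝕎_φ. -/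
/-- `𝕎_φ`: the set of sequences `{yₙ}` such that every solution of
`x_{n+1} = e(−φ)xₙ + yₙ` (n ≥ 1) is bounded. -/
def memW (φ : ℝ) (y : ℕ → ℂ) : Prop :=
  ∀ x : ℕ → ℂ, (∀ n, 1 ≤ n → x (n + 1) = e (-φ) * x n + y n) →
    ∃ C : ℝ, ∀ n, 1 ≤ n → ‖x n‖ ≤ C

open Set

/-!
Let `S` be the solution of `S_{n+1} = q S_n + z_n` with `S_0 = 0`, where `q = e(-φ)`; it is bounded
by some `M` because `z ∈ 𝕎_φ`. For a solution `x` of `x_{n+1} = q x_n + b_n z_n` (summation by parts)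
`y_n = x_n - b_n S_n` solves `y_{n+1} = q y_n + (b_n - b_{n+1}) S_{n+1}`, and `|q| = 1` gives
`|y_{n+1}| ≤ |y_n| + |b_{n+1} - b_n| M`. For monotone `b` these increments telescope to
`|y_n| ≤ |y_1| + |b_n - b_1| M`, which is bounded since `b` is.
-/

lemma norm_e (x : ℝ) : ‖e x‖ = 1 := by
  simp [e, Complex.norm_exp]

def linRecSeq (q : ℂ) (y : ℕ → ℂ) : ℕ → ℂ
  | 0 => 0
  | n + 1 => q * linRecSeq q y n + y n

lemma norm_sub_mul_succ_le {q : ℂ} (hq : ‖q‖ ≤ 1) {b : ℕ → ℝ} {x z S : ℕ → ℂ} {n : ℕ} {M : ℝ}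
    (hx : x (n + 1) = q * x n + b n * z n) (hS : S (n + 1) = q * S n + z n)
    (hM : ‖S (n + 1)‖ ≤ M) :
    ‖x (n + 1) - b (n + 1) * S (n + 1)‖ ≤ ‖x n - b n * S n‖ + |b (n + 1) - b n| * M := by
  have hrec : x (n + 1) - b (n + 1) * S (n + 1)
      = q * (x n - b n * S n) + ((b n - b (n + 1) : ℝ) : ℂ) * S (n + 1) := by
    rw [hx, hS]; push_cast; ring
  calc ‖x (n + 1) - b (n + 1) * S (n + 1)‖
      ≤ ‖q‖ * ‖x n - b n * S n‖ + |b n - b (n + 1)| * ‖S (n + 1)‖ := by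
        rw [hrec, ← norm_mul, ← Real.norm_eq_abs, ← Complex.norm_real, ← norm_mul]
        exact norm_add_le _ _
    _ ≤ 1 * ‖x n - b n * S n‖ + |b (n + 1) - b n| * M := by
        rw [abs_sub_comm]
        gcongr
    _ = ‖x n - b n * S n‖ + |b (n + 1) - b n| * M := by rw [one_mul]

lemma le_add_abs_sub_mul_of_monotoneOn {r b : ℕ → ℝ} {M : ℝ} (hb : MonotoneOn b (Ici 1))
    (hr : ∀ n, 1 ≤ n → r (n + 1) ≤ r n + |b (n + 1) - b n| * M) :
    ∀ n, 1 ≤ n → r n ≤ r 1 + |b n - b 1| * M := by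
  intro n hn
  induction n, hn using Nat.le_induction with
  | base => simp
  | succ n hn ih =>
    have h1 : b 1 ≤ b n := hb (mem_Ici.mpr le_rfl) (mem_Ici.mpr hn) hn
    have h2 : b n ≤ b (n + 1) := hb (mem_Ici.mpr hn) (mem_Ici.mpr (by omega)) (by omega)
    have := hr n hn
    rw [abs_of_nonneg (by linarith)] at this ih ⊢
    linarith

lemma le_add_abs_sub_mul_of_monotoneOn_or_antitoneOn {r b : ℕ → ℝ} {M : ℝ}
    (hb : MonotoneOn b (Ici 1) ∨ AntitoneOn b (Ici 1))
    (hr : ∀ n, 1 ≤ n → r (n + 1) ≤ r n + |b (n + 1) - b n| * M) :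
    ∀ n, 1 ≤ n → r n ≤ r 1 + |b n - b 1| * M := by
  rcases hb with hb | hb
  · exact le_add_abs_sub_mul_of_monotoneOn hb hr
  · have hneg := le_add_abs_sub_mul_of_monotoneOn (r := r) (M := M) hb.neg
      (fun n hn => by simpa only [Pi.neg_apply, ← neg_sub', abs_neg] using hr n hn)
    simpa only [Pi.neg_apply, ← neg_sub', abs_neg] using hneg

theorem stmt_10_general (φ : ℝ) (b : ℕ → ℝ) (z : ℕ → ℂ)
    (hmono : (∀ m n, 1 ≤ m → m ≤ n → b m ≤ b n) ∨ (∀ m n, 1 ≤ m → m ≤ n → b n ≤ b m))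
    (hbdd : ∃ C : ℝ, ∀ n, 1 ≤ n → |b n| ≤ C)
    (hz : memW φ z) :
    memW φ (fun n => (b n : ℂ) * z n) := by
  intro x hx
  set S := linRecSeq (e (-φ)) z
  obtain ⟨M, hM⟩ := hz S fun n _ => rfl
  obtain ⟨C, hC⟩ := hbdd
  have hb : MonotoneOn b (Ici 1) ∨ AntitoneOn b (Ici 1) :=
    hmono.imp (fun h m hm _ _ hmn => h m _ hm hmn) (fun h m hm _ _ hmn => h m _ hm hmn)
  have hy : ∀ n, 1 ≤ n → ‖x n - b n * S n‖ ≤ ‖x 1 - b 1 * S 1‖ + |b n - b 1| * M :=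
    le_add_abs_sub_mul_of_monotoneOn_or_antitoneOn hb fun n hn =>
      norm_sub_mul_succ_le (norm_e _).le (hx n hn) rfl (hM (n + 1) (by omega))
  refine ⟨‖x 1 - b 1 * S 1‖ + 3 * C * M, fun n hn => ?_⟩
  have hM0 : 0 ≤ M := (norm_nonneg _).trans (hM 1 le_rfl)
  have hdiff : |b n - b 1| ≤ 2 * C := by
    linarith [abs_sub (b n) (b 1), hC n hn, hC 1 le_rfl]
  calc ‖x n‖ = ‖(x n - b n * S n) + b n * S n‖ := by rw [sub_add_cancel]
    _ ≤ ‖x n - b n * S n‖ + |b n| * ‖S n‖ := by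
        rw [← Real.norm_eq_abs, ← Complex.norm_real, ← norm_mul]
        exact norm_add_le _ _
    _ ≤ ‖x 1 - b 1 * S 1‖ + 2 * C * M + C * M := by
        gcongr
        · exact (hy n hn).trans (by gcongr)
        · exact (abs_nonneg _).trans (hC n hn)
        · exact hC n hn
        · exact hM n hn
    _ = ‖x 1 - b 1 * S 1‖ + 3 * C * M := by ring

/-- if `{bₙ}_{n≥1}` is a monotone bounded real sequence and
`{zₙ} ∈ 𝕎_φ`, then `{bₙ zₙ} ∈ 𝕎_φ`. -/
theorem stmt_10 (φ : ℝ) (hφ0 : 0 ≤ φ) (hφ1 : φ < 1) (b : ℕ → ℝ) (z : ℕ → ℂ)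
    (hmono : (∀ m n, 1 ≤ m → m ≤ n → b m ≤ b n) ∨ (∀ m n, 1 ≤ m → m ≤ n → b n ≤ b m))
    (hbdd : ∃ C : ℝ, ∀ n, 1 ≤ n → |b n| ≤ C)
    (hz : memW φ z) :
    memW φ (fun n => (b n : ℂ) * z n) :=
  stmt_10_general φ b z hmono hbdd hz
end
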